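/- arXiv:1904.04123 — 2 statements merged into one kernel-verified Lean document; each statement's English description precedes it below -/
import Mathlib

section
/- (Claim 1, pruning rule as successive elimination.) Let N ≥ 1, t > 0, T > 0, ν > 0 with t + log(1/(Nν)) > 0, and set θ = ν·e^{−t}, ρ = t/(t + log(1/(Nν))), and β = T/(2ρ). Then for any α ∈ ℝ^N and any index i, if the softmax weight satisfies Φ_i(α; T) < θ, then α_i/t + β < (max_{1 ≤ j ≤ N} α_j)/t − β. -/
open Real Finset

/-- The softmax weight of coordinate `i` of `α : Fin N → ℝ` at temperature `T`. -/
noncomputable def softmaxWeight {N : ℕ} (α : Fin N → ℝ) (T : ℝ) (i : Fin N) : ℝ :=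
  Real.exp (α i / T) / ∑ j, Real.exp (α j / T)

/-- Claim 1 (pruning rule as successive elimination): with threshold `θ = ν·e^{−t}`,
`ρ = t/(t + log(1/(Nν)))` and margin `β = T/(2ρ)`, the pruning rule `Φ_i(α; T) < θ`
implies the elimination condition `α_i/t + β < (max_j α_j)/t − β`. -/
theorem pruning_rule_as_successive_elimination {N : ℕ} (hN : 1 ≤ N)
    (t T ν : ℝ) (ht : 0 < t) (hT : 0 < T) (hν : 0 < ν)
    (hpos : 0 < t + Real.log (1 / (N * ν)))
    (θ ρ β : ℝ)
    (hθ : θ = ν * Real.exp (-t))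
    (hρ : ρ = t / (t + Real.log (1 / (N * ν))))
    (hβ : β = T / (2 * ρ))
    (α : Fin N → ℝ) (i : Fin N)
    (h : softmaxWeight α T i < θ) :
    α i / t + β < (Finset.univ.sup' (Finset.univ_nonempty_iff.mpr ⟨i⟩) α) / t - β := by
  set L := Real.log (1 / (N * ν)) with hLdef
  set M := (Finset.univ.sup' (Finset.univ_nonempty_iff.mpr ⟨i⟩) α) with hMdef
  have hNpos : (0 : ℝ) < N := by exact_mod_cast Nat.lt_of_lt_of_le Nat.zero_lt_one hN
  have hL : L = -(Real.log N + Real.log ν) := by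
    rw [hLdef, one_div, Real.log_inv, Real.log_mul (ne_of_gt hNpos) (ne_of_gt hν)]
  have hsum_pos : 0 < ∑ j, Real.exp (α j / T) := by
    apply Finset.sum_pos (fun j _ => Real.exp_pos _)
    exact ⟨i, Finset.mem_univ i⟩
  have h1 : Real.exp (α i / T) < θ * ∑ j, Real.exp (α j / T) := by
    have := (div_lt_iff₀ hsum_pos).mp h
    simpa [softmaxWeight] using this
  have h2 : ∑ j, Real.exp (α j / T) ≤ N * Real.exp (M / T) := by
    calc ∑ j, Real.exp (α j / T) ≤ ∑ _j : Fin N, Real.exp (M / T) := by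
          apply Finset.sum_le_sum
          intro j _
          exact Real.exp_le_exp.mpr (div_le_div_of_nonneg_right
            (Finset.le_sup' α (Finset.mem_univ j)) hT.le)
      _ = N * Real.exp (M / T) := by simp [mul_comm]
  have hθpos : 0 < θ := by rw [hθ]; positivity
  have h3 : Real.exp (α i / T) < Real.exp (Real.log ν - t + Real.log N + M / T) := by
    calc Real.exp (α i / T) < θ * (N * Real.exp (M / T)) :=
          lt_of_lt_of_le h1 (by exact mul_le_mul_of_nonneg_left h2 (le_of_lt hθpos))
      _ = Real.exp (Real.log ν - t + Real.log N + M / T) := by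
          rw [hθ, Real.exp_add, Real.exp_add, Real.exp_sub, Real.exp_log hν,
            Real.exp_log hNpos, Real.exp_neg]
          ring
  have h4 : α i / T < Real.log ν - t + Real.log N + M / T := Real.exp_lt_exp.mp h3
  have h5 : M - α i > T * (t + L) := by
    rw [hL]
    have h4' := mul_lt_mul_of_pos_left h4 hT
    have e1 : T * (α i / T) = α i := by field_simp
    have e2 : T * (M / T) = M := by field_simp
    nlinarith [h4', e1, e2]
  -- β = T*(t+L)/(2t)
  have hρpos : 0 < ρ := by rw [hρ]; positivity
  have hβval : β = T * (t + L) / (2 * t) := by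
    rw [hβ, hρ]
    field_simp
  have h6 : T * (t + L) / t < (M - α i) / t := by
    exact div_lt_div_of_pos_right h5 ht
  have e3 : (M - α i) / t = M / t - α i / t := sub_div _ _ _
  have e4 : 2 * (T * (t + L) / (2 * t)) = T * (t + L) / t := by
    field_simp
  rw [hβval]
  linarith
end

section
/- (Theorem 1, probabilistic core: the ASAP pruning rule only fires for expected-suboptimal operations.) Fix an integer N ≥ 1 and reals δ ∈ (0,1), η > 0, L > 0. For each i ∈ {1, …, N} let (g_{s,i})_{s ≥ 1} be real-valued random variables on a common probability space such that for each fixed i the family (g_{s,i})_{s ≥ 1} is independent and g_{s,i} ∈ [−ηL, ηL] almost surely; set α_{t,i} = Σ_{s=1}^t g_{s,i} and ᾱ_{t,i} = Σ_{s=1}^t E[g_{s,i}]. Let (ν_t)_{t ≥ 1} be positive reals with t + log(1/(N ν_t)) > 0 for every t ≥ 1, and define the threshold policy θ_t = ν_t e^{−t}, ρ_t = t/(t + log(1/(N ν_t))), and annealing schedule T_t = ηL·ρ_t·sqrt((8/t)·log(π² N t² / (3δ))). Then with probability at least 1 − δ the following holds: for every t ≥ 1 and every i ∈ {1, …, N},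 if Φ_i(α_{t,·}; T_t) < θ_t then ᾱ_{t,i} < max_{1 ≤ j ≤ N} ᾱ_{t,j}; in particular, no operation maximizing the expected accumulated weight ever satisfies the pruning condition. -/
/-!
By Hoeffding's inequality and a union bound over `t ≥ 1` and `i` (the failure probabilities
`6δ / (π² N t²)` sum to `δ`), with probability at least `1 − δ` every empirical weight `α_{t,i}`
lies within `t β_t` of its mean `ᾱ_{t,i}`. Since every softmax weight is at least
`exp ((α_i − max α) / T) / N`, the pruning rule can only fire when `α_{t,i}` lies more than
`T_t log (1 / (θ_t N)) = 2 t β_t` below the maximum, a gap that perturbations of size `t β_t`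
cannot close.
-/

open MeasureTheory ProbabilityTheory Real Finset

open scoped NNReal

lemma lt_sup'_add_mul_log_of_softmaxWeight_lt {N : ℕ} {α : Fin N → ℝ} {T θ : ℝ} (hT : 0 < T)
    {i : Fin N} (hne : (univ : Finset (Fin N)).Nonempty) (h : softmaxWeight α T i < θ) :
    α i < univ.sup' hne α + T * log (θ * N) := by
  set M := univ.sup' hne α
  have hsum_pos : 0 < ∑ j, exp (α j / T) := sum_pos (fun j _ => exp_pos _) hne
  have hsum : ∑ j, exp (α j / T) ≤ N * exp (M / T) := by
    calc ∑ j, exp (α j / T) ≤ ∑ _j : Fin N, exp (M / T) := sum_le_sum fun j _ =>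
          exp_le_exp.2 (div_le_div_of_nonneg_right (le_sup' α (mem_univ j)) hT.le)
      _ = N * exp (M / T) := by simp
  rw [softmaxWeight, div_lt_iff₀ hsum_pos] at h
  have hθ : 0 < θ := pos_of_mul_pos_left ((exp_pos _).trans h) hsum_pos.le
  have hlt : exp (α i / T) < θ * N * exp (M / T) := by
    nlinarith [mul_le_mul_of_nonneg_left hsum hθ.le]
  have hθN : 0 < θ * N := pos_of_mul_pos_left ((exp_pos _).trans hlt) (exp_pos _).le
  have := log_lt_log (exp_pos _) hlt
  rw [log_exp, log_mul hθN.ne' (exp_pos _).ne', log_exp, div_lt_iff₀ hT, add_mul,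
    div_mul_cancel₀ M hT.ne'] at this
  linarith

lemma lt_sup'_of_abs_sub_le {ι : Type*} [Fintype ι] {α ᾱ : ι → ℝ} {b : ℝ}
    (hb : ∀ j, |α j - ᾱ j| ≤ b) (hne : (univ : Finset ι).Nonempty) {i : ι}
    (hi : α i < univ.sup' hne α - 2 * b) : ᾱ i < univ.sup' hne ᾱ := by
  obtain ⟨j, -, hj⟩ := exists_mem_eq_sup' hne α
  have := le_sup' ᾱ (mem_univ j)
  linarith [(abs_le.1 (hb i)).1, (abs_le.1 (hb j)).2]

lemma ProbabilityTheory.HasSubgaussianMGF.measureReal_abs_ge_le {Ω : Type*} [MeasurableSpace Ω]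
    {μ : Measure Ω} {X : Ω → ℝ} {c : ℝ≥0} (h : HasSubgaussianMGF X c μ)
    {ε : ℝ} (hε : 0 ≤ ε) :
    μ.real {ω | ε ≤ |X ω|} ≤ 2 * exp (-ε ^ 2 / (2 * c)) := by
  have hsplit : {ω | ε ≤ |X ω|} = {ω | ε ≤ X ω} ∪ {ω | ε ≤ (-X) ω} := by
    ext ω; simp only [le_abs', Set.mem_ofPred_eq, Set.mem_union, Pi.neg_apply, le_neg]; tauto
  rw [hsplit, two_mul]
  exact (measureReal_union_le _ _).trans
    (add_le_add (h.measure_ge_le hε) (h.neg.measure_ge_le hε))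

section Hoeffding

variable {Ω : Type*} [MeasurableSpace Ω] {μ : Measure Ω} [IsProbabilityMeasure μ]

lemma measureReal_abs_sum_sub_integral_ge_le {ι : Type*} {X : ι → Ω → ℝ}
    (hindep : iIndepFun X μ) {s : Finset ι} (hmeas : ∀ i ∈ s, AEMeasurable (X i) μ) {c : ℝ}
    (hbdd : ∀ i ∈ s, ∀ᵐ ω ∂μ, X i ω ∈ Set.Icc (-c) c) {ε : ℝ} (hε : 0 ≤ ε) :
    μ.real {ω | ε ≤ |∑ i ∈ s, X i ω - ∑ i ∈ s, μ[X i]|} ≤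
      2 * exp (-ε ^ 2 / (2 * #s * c ^ 2)) := by
  have hcentered : iIndepFun (fun i ω => X i ω - μ[X i]) μ :=
    hindep.comp (fun i (x : ℝ) => x - ∫ ω, X i ω ∂μ) fun i => measurable_id.sub_const _
  have h := (HasSubgaussianMGF.sum_of_iIndepFun hcentered fun i hi =>
    hasSubgaussianMGF_of_mem_Icc (hmeas i hi) (hbdd i hi)).measureReal_abs_ge_le hε
  simp only [sum_sub_distrib] at h
  convert h using 4
  simp [← two_mul, mul_assoc]

lemma measureReal_abs_sum_Icc_sub_integral_ge_le {X : ℕ → Ω → ℝ}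
    (hindep : iIndepFun (fun s : {s : ℕ // 1 ≤ s} => X s) μ)
    (hmeas : ∀ s, 1 ≤ s → AEMeasurable (X s) μ) {c : ℝ}
    (hbdd : ∀ s, 1 ≤ s → ∀ᵐ ω ∂μ, X s ω ∈ Set.Icc (-c) c) (t : ℕ) {ε : ℝ} (hε : 0 ≤ ε) :
    μ.real {ω | ε ≤ |∑ s ∈ Icc 1 t, X s ω - ∑ s ∈ Icc 1 t, μ[X s]|} ≤
      2 * exp (-ε ^ 2 / (2 * t * c ^ 2)) := by
  have hIcc : ∀ s ∈ Icc 1 t, 1 ≤ s := fun s hs => (mem_Icc.1 hs).1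
  have hsum (f : ℕ → ℝ) : ∑ s ∈ (Icc 1 t).subtype (1 ≤ ·), f s = ∑ s ∈ Icc 1 t, f s :=
    sum_subtype_of_mem f hIcc
  have h := measureReal_abs_sum_sub_integral_ge_le hindep (s := (Icc 1 t).subtype (1 ≤ ·))
    (fun s _ => hmeas s s.2) (fun s _ => hbdd s s.2) hε
  convert h using 6
  · congr 1 <;> exact (hsum _).symm
  · simp [card_subtype, filter_true_of_mem hIcc]

end Hoeffding

/-- The confidence radius `β_t` of the paper, with `c = ηL`. -/
noncomputable def confidenceRadius (c δ : ℝ) (N t : ℕ) : ℝ :=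
  c * √(2 / t * log (π ^ 2 * N * t ^ 2 / (3 * δ)))

lemma one_lt_pi_sq_mul_div {N t : ℕ} (hN : 1 ≤ N) (ht : 1 ≤ t) {δ : ℝ} (hδ : δ ∈ Set.Ioo 0 1) :
    1 < π ^ 2 * N * t ^ 2 / (3 * δ) := by
  have hN' : (1 : ℝ) ≤ N := by exact_mod_cast hN
  have ht' : (1 : ℝ) ≤ t := by exact_mod_cast ht
  rw [one_lt_div (by linarith [hδ.1])]
  have hπ : 9 < π ^ 2 := by nlinarith [pi_gt_three]
  have hNt : 1 ≤ (N : ℝ) * t ^ 2 := one_le_mul_of_one_le_of_one_le hN' (one_le_pow₀ ht')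
  nlinarith [hδ.2]

lemma confidenceRadius_pos {c δ : ℝ} (hc : 0 < c) (hδ : δ ∈ Set.Ioo 0 1)
    {N t : ℕ} (hN : 1 ≤ N) (ht : 1 ≤ t) : 0 < confidenceRadius c δ N t := by
  have ht' : (0 : ℝ) < t := by exact_mod_cast ht
  have := log_pos (one_lt_pi_sq_mul_div hN ht hδ)
  unfold confidenceRadius
  positivity

lemma two_mul_exp_neg_sq_confidenceRadius {c δ : ℝ} (hc : c ≠ 0) (hδ : δ ∈ Set.Ioo 0 1)
    {N t : ℕ} (hN : 1 ≤ N) (ht : 1 ≤ t) :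
    2 * exp (-(t * confidenceRadius c δ N t) ^ 2 / (2 * t * c ^ 2)) =
      6 * δ / (π ^ 2 * N * t ^ 2) := by
  have hK := one_lt_pi_sq_mul_div hN ht hδ
  have ht' : (0 : ℝ) < t := by exact_mod_cast ht
  have hexponent : (t * confidenceRadius c δ N t) ^ 2 / (2 * t * c ^ 2) =
      log (π ^ 2 * N * t ^ 2 / (3 * δ)) := by
    rw [confidenceRadius, mul_pow, mul_pow, sq_sqrt (by positivity [log_pos hK])]
    field_simp
  rw [neg_div, hexponent, exp_neg, exp_log (by linarith)]
  have := hδ.1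
  field_simp
  ring

lemma hasSum_six_mul_div_pi_sq_mul_sq (δ : ℝ) :
    HasSum (fun t : ℕ => 6 * δ / (π ^ 2 * t ^ 2)) δ := by
  have h := hasSum_zeta_two.mul_left (6 * δ / π ^ 2)
  have hterm : (fun t : ℕ => 6 * δ / π ^ 2 * (1 / (t : ℝ) ^ 2)) =
      fun t : ℕ => 6 * δ / (π ^ 2 * t ^ 2) := by
    ext t; ring
  rwa [hterm, div_mul_div_cancel₀ (by positivity),
    mul_div_cancel_left₀ _ (by norm_num : (6 : ℝ) ≠ 0)] at h

section DeviationEvent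

variable {Ω : Type*} [MeasurableSpace Ω] {μ : Measure Ω} [IsProbabilityMeasure μ]
  {c δ : ℝ} {N : ℕ}

lemma measure_mul_confidenceRadius_lt_abs_sum_sub_le {X : ℕ → Ω → ℝ}
    (hindep : iIndepFun (fun s : {s : ℕ // 1 ≤ s} => X s) μ)
    (hmeas : ∀ s, 1 ≤ s → AEMeasurable (X s) μ) (hc : 0 < c)
    (hbdd : ∀ s, 1 ≤ s → ∀ᵐ ω ∂μ, X s ω ∈ Set.Icc (-c) c) (hδ : δ ∈ Set.Ioo 0 1)
    (hN : 1 ≤ N) (t : ℕ) :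
    μ {ω | t * confidenceRadius c δ N t < |∑ s ∈ Icc 1 t, X s ω - ∑ s ∈ Icc 1 t, μ[X s]|} ≤
      ENNReal.ofReal (6 * δ / (π ^ 2 * N * t ^ 2)) := by
  rcases Nat.eq_zero_or_pos t with rfl | ht
  · simp
  have hε : 0 ≤ t * confidenceRadius c δ N t :=
    mul_nonneg t.cast_nonneg (confidenceRadius_pos hc hδ hN ht).le
  refine (measure_mono (Set.ofPred_subset_ofPred.2 fun _ => le_of_lt)).trans ?_
  rw [← ofReal_measureReal, ← two_mul_exp_neg_sq_confidenceRadius hc.ne' hδ hN ht]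
  exact ENNReal.ofReal_le_ofReal
    (measureReal_abs_sum_Icc_sub_integral_ge_le hindep hmeas hbdd t hε)

lemma ofReal_one_sub_le_measure_forall_abs_sum_sub_le (X : Fin N → ℕ → Ω → ℝ)
    (hindep : ∀ i, iIndepFun (fun s : {s : ℕ // 1 ≤ s} => X i s) μ)
    (hmeas : ∀ i, ∀ s, 1 ≤ s → AEMeasurable (X i s) μ) (hc : 0 < c)
    (hbdd : ∀ i, ∀ s, 1 ≤ s → ∀ᵐ ω ∂μ, X i s ω ∈ Set.Icc (-c) c) (hδ : δ ∈ Set.Ioo 0 1)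
    (hN : 1 ≤ N) :
    ENNReal.ofReal (1 - δ) ≤ μ {ω | ∀ t : ℕ, ∀ i,
      |∑ s ∈ Icc 1 t, X i s ω - ∑ s ∈ Icc 1 t, μ[X i s]| ≤ t * confidenceRadius c δ N t} := by
  set bad : ℕ → Fin N → Set Ω := fun t i =>
    {ω | t * confidenceRadius c δ N t < |∑ s ∈ Icc 1 t, X i s ω - ∑ s ∈ Icc 1 t, μ[X i s]|}
  have hN' : (N : ℝ) ≠ 0 := by positivity
  have hbad : μ (⋃ t, ⋃ i, bad t i) ≤ ENNReal.ofReal δ :=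
    calc μ (⋃ t, ⋃ i, bad t i)
        ≤ ∑' t, ∑ i, μ (bad t i) :=
          (measure_iUnion_le _).trans
            (ENNReal.tsum_le_tsum fun t => measure_iUnion_fintype_le _ _)
      _ ≤ ∑' t : ℕ, ∑ _i : Fin N, ENNReal.ofReal (6 * δ / (π ^ 2 * N * t ^ 2)) :=
          ENNReal.tsum_le_tsum fun t => sum_le_sum fun i _ =>
            measure_mul_confidenceRadius_lt_abs_sum_sub_le (hindep i) (hmeas i) hc (hbdd i) hδ hN t
      _ = ∑' t : ℕ, ENNReal.ofReal (6 * δ / (π ^ 2 * t ^ 2)) := by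
          congr 1 with t
          rw [sum_const, card_univ, Fintype.card_fin, nsmul_eq_mul, ← ENNReal.ofReal_natCast,
            ← ENNReal.ofReal_mul N.cast_nonneg]
          congr 1
          field_simp
      _ = ENNReal.ofReal δ := by
          rw [← ENNReal.ofReal_tsum_of_nonneg (fun t => by have := hδ.1; positivity)
            (hasSum_six_mul_div_pi_sq_mul_sq δ).summable,
            (hasSum_six_mul_div_pi_sq_mul_sq δ).tsum_eq]
  have hgood : (⋃ t, ⋃ i, bad t i)ᶜ ⊆ {ω | ∀ t : ℕ, ∀ i,
      |∑ s ∈ Icc 1 t, X i s ω - ∑ s ∈ Icc 1 t, μ[X i s]| ≤ t * confidenceRadius c δ N t} := by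
    intro ω hω
    simpa [bad] using hω
  calc ENNReal.ofReal (1 - δ) = 1 - ENNReal.ofReal δ := by
        rw [ENNReal.ofReal_sub _ hδ.1.le, ENNReal.ofReal_one]
    _ ≤ 1 - μ (⋃ t, ⋃ i, bad t i) := tsub_le_tsub_left hbad 1
    _ ≤ μ (⋃ t, ⋃ i, bad t i)ᶜ := by
        rw [tsub_le_iff_left, ← measure_univ (μ := μ), ← Set.union_compl_self (⋃ t, ⋃ i, bad t i)]
        exact measure_union_le _ _
    _ ≤ _ := measure_mono hgood

end DeviationEvent

lemma mul_sqrt_eight_div_mul_log (c δ : ℝ) (N t : ℕ) :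
    c * √(8 / t * log (π ^ 2 * N * t ^ 2 / (3 * δ))) = 2 * confidenceRadius c δ N t := by
  rw [confidenceRadius, show (8 : ℝ) / t = 2 ^ 2 * (2 / t) by ring, mul_assoc,
    sqrt_mul (by positivity), sqrt_sq two_pos.le]
  ring

lemma log_mul_exp_neg_mul {ν : ℝ} (hν : 0 < ν) {N : ℕ} (hN : 1 ≤ N) (t : ℝ) :
    log (ν * exp (-t) * N) = -(t + log (1 / (N * ν))) := by
  have hN' : (N : ℝ) ≠ 0 := by positivity
  rw [log_mul (by positivity) hN', log_mul hν.ne' (exp_pos _).ne', log_exp, one_div, log_inv,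
    log_mul hN' hν.ne']
  ring

/-- Theorem 1, probabilistic core: with threshold policy `θ_t = ν_t e^{−t}`,
`ρ_t = t/(t + log(1/(N ν_t)))` and annealing schedule
`T_t = ηL·ρ_t·sqrt((8/t)·log(π² N t²/(3δ)))`, with probability at least `1 − δ`, whenever the
ASAP pruning rule `Φ_i(α_{t,·}; T_t) < θ_t` fires, the operation `i` is suboptimal in
expectation: `ᾱ_{t,i} < max_j ᾱ_{t,j}`. -/
theorem asap_prunes_only_suboptimal
    {Ω : Type*} [MeasurableSpace Ω] (μ : Measure Ω) [IsProbabilityMeasure μ]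
    (N : ℕ) (hN : 1 ≤ N)
    (δ η L : ℝ) (hδ : δ ∈ Set.Ioo (0 : ℝ) 1) (hη : 0 < η) (hL : 0 < L)
    (g : Fin N → ℕ → Ω → ℝ)
    (hmeas : ∀ i, ∀ s, 1 ≤ s → Measurable (g i s))
    (hindep : ∀ i, iIndepFun (fun s : {s : ℕ // 1 ≤ s} => g i s) μ)
    (hbdd : ∀ i, ∀ s, 1 ≤ s → ∀ᵐ ω ∂μ, g i s ω ∈ Set.Icc (-(η * L)) (η * L))
    (ν : ℕ → ℝ) (hν : ∀ t, 1 ≤ t → 0 < ν t)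
    (hνpos : ∀ t : ℕ, 1 ≤ t → 0 < (t : ℝ) + Real.log (1 / (N * ν t)))
    (θ T ρ : ℕ → ℝ)
    (hθ : ∀ t : ℕ, θ t = ν t * Real.exp (-(t : ℝ)))
    (hρ : ∀ t : ℕ, ρ t = (t : ℝ) / ((t : ℝ) + Real.log (1 / (N * ν t))))
    (hT : ∀ t : ℕ, T t =
      η * L * ρ t * Real.sqrt ((8 / t) * Real.log (π ^ 2 * N * t ^ 2 / (3 * δ)))) :
    ENNReal.ofReal (1 - δ) ≤
      μ {ω | ∀ t : ℕ, 1 ≤ t → ∀ i : Fin N,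
          softmaxWeight (fun j => ∑ s ∈ Finset.Icc 1 t, g j s ω) (T t) i < θ t →
            (∑ s ∈ Finset.Icc 1 t, ∫ x, g i s x ∂μ) <
              Finset.univ.sup' (Finset.univ_nonempty_iff.mpr ⟨i⟩)
                (fun j => ∑ s ∈ Finset.Icc 1 t, ∫ x, g j s x ∂μ)} := by
  refine (ofReal_one_sub_le_measure_forall_abs_sum_sub_le g hindep
    (fun i s hs => (hmeas i s hs).aemeasurable) (mul_pos hη hL) hbdd hδ hN).trans
    (measure_mono fun ω hω t ht i hfire => ?_)
  set β := confidenceRadius (η * L) δ N t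
  have hρ_mul : ρ t * (t + log (1 / (N * ν t))) = t := by
    rw [hρ]; exact div_mul_cancel₀ _ (hνpos t ht).ne'
  have hT_eq : T t = 2 * ρ t * β := by
    rw [hT, mul_right_comm, mul_sqrt_eight_div_mul_log]; ring
  have hT_pos : 0 < T t := by
    have : 0 < ρ t := by rw [hρ]; exact div_pos (by exact_mod_cast ht) (hνpos t ht)
    rw [hT_eq]
    exact mul_pos (mul_pos two_pos this) (confidenceRadius_pos (mul_pos hη hL) hδ hN ht)
  have hT_log : T t * log (θ t * N) = -(2 * (t * β)) := by
    rw [hθ, log_mul_exp_neg_mul (hν t ht) hN, hT_eq]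
    linear_combination (-2 * β) * hρ_mul
  have hfar := lt_sup'_add_mul_log_of_softmaxWeight_lt hT_pos (univ_nonempty_iff.mpr ⟨i⟩) hfire
  exact lt_sup'_of_abs_sub_le (fun j => hω t j) _ (by linarith)
end
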